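/- arXiv:1102.3446 — 3 statements merged into one kernel-verified Lean document; each statement's English description precedes it below -/
import Mathlib

section
/- The function u₁(t) = tanh(t/√2) satisfies u₁'' + u₁ - u₁³ = 0 on ℝ, u₁(0) = 0, lim_{t→+∞} u₁(t) = 1 and lim_{t→-∞} u₁(t) = -1. Moreover it is the unique such solution: if v : ℝ → ℝ is twice continuously differentiable, satisfies v'' + v - v³ = 0 on ℝ, v(0) = 0, lim_{t→+∞} v(t) = 1 and lim_{t→-∞} v(t) = -1, then v = u₁. -/
/-!
A solution `v` of `v'' = v³ - v` conserves the energy `v'² + v² - v⁴/2`. Since `v → 1` at `+∞`,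
`v'²` cannot stay away from zero there, which fixes the energy level and gives
`v'² = (1 - v²)² / 2`. Then `|(1 - v²)'| = 2 |v v'| ≤ 2 |v| |1 - v²|`, so by Grönwall `1 - v²`
never vanishes: `|v| < 1` and `v'` never vanishes. As `v` climbs from `0` to `1`, `v' > 0`, i.e.
`v' = (1 - v²) / √2`. This first-order equation is Lipschitz on `[-1, 1]` and is also solved by
`u₁`, with the same value at `0`.
-/

open Filter

/-- The heteroclinic solution `u₁(t) = tanh(t/√2)` of the one-dimensional
Allen–Cahn equation. -/
noncomputable def u₁ (t : ℝ) : ℝ := Real.tanh (t / Real.sqrt 2)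

open Real Set Topology

namespace Real

lemma hasDerivAt_tanh (x : ℝ) : HasDerivAt tanh (1 - tanh x ^ 2) x := by
  have h := (hasDerivAt_sinh x).div (hasDerivAt_cosh x) (cosh_pos x).ne'
  rw [show sinh / cosh = tanh from funext fun y => (tanh_eq_sinh_div_cosh y).symm] at h
  refine h.congr_deriv ?_
  rw [tanh_eq_sinh_div_cosh]
  field_simp

lemma tanh_eq_one_sub (x : ℝ) : tanh x = 1 - 2 / (exp (2 * x) + 1) := by
  rw [tanh_eq, show 2 * x = x + x by ring, exp_add, exp_neg]
  field_simp
  ring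

lemma tendsto_tanh_atTop : Tendsto tanh atTop (𝓝 1) := by
  have h : Tendsto (fun x => exp (2 * x) + 1) atTop atTop :=
    tendsto_atTop_add_const_right _ 1 (tendsto_exp_atTop.comp (tendsto_id.const_mul_atTop two_pos))
  simpa [← tanh_eq_one_sub] using ((tendsto_const_nhds (x := (2 : ℝ))).div_atTop h).const_sub 1

lemma tendsto_tanh_atBot : Tendsto tanh atBot (𝓝 (-1)) := by
  simpa [Function.comp_def] using (tendsto_tanh_atTop.comp tendsto_neg_atBot_atTop).neg

end Real

lemma hasDerivAt_u₁ (t : ℝ) : HasDerivAt u₁ ((1 - u₁ t ^ 2) / √2) t := by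
  have h := (hasDerivAt_tanh (t / √2)).comp t ((hasDerivAt_id t).div_const √2)
  exact h.congr_deriv (by simp [u₁, div_eq_mul_inv])

lemma deriv_deriv_u₁_add_sub_pow_three (t : ℝ) : deriv (deriv u₁) t + u₁ t - u₁ t ^ 3 = 0 := by
  have h := ((hasDerivAt_u₁ t).fun_pow 2).const_sub 1 |>.div_const √2
  rw [funext fun s => (hasDerivAt_u₁ s).deriv, h.deriv]
  field_simp
  rw [sq_sqrt zero_le_two]
  ring

lemma tendsto_u₁_atTop : Tendsto u₁ atTop (𝓝 1) :=
  tendsto_tanh_atTop.comp (tendsto_id.atTop_div_const (by positivity))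

lemma tendsto_u₁_atBot : Tendsto u₁ atBot (𝓝 (-1)) :=
  tendsto_tanh_atBot.comp (tendsto_id.atBot_div_const (by positivity))

lemma lipschitzOnWith_one_sub_sq_div_sqrt_two :
    LipschitzOnWith 2 (fun y : ℝ => (1 - y ^ 2) / √2) (Icc (-1) 1) := by
  refine LipschitzOnWith.of_dist_le_mul fun x hx y hy => ?_
  have hxy : |x + y| ≤ 2 := abs_le.mpr ⟨by linarith [hx.1, hy.1], by linarith [hx.2, hy.2]⟩
  rw [dist_eq, dist_eq, show (1 - x ^ 2) / √2 - (1 - y ^ 2) / √2 = -(x + y) / √2 * (x - y) by ring,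
    abs_mul, abs_div, abs_neg, abs_of_pos (by positivity : (0 : ℝ) < √2)]
  gcongr
  calc |x + y| / √2 ≤ |x + y| := div_le_self (abs_nonneg _) (one_le_sqrt.mpr one_le_two)
    _ ≤ 2 := hxy

lemma eq_zero_of_tendsto_sq_deriv {f : ℝ → ℝ} (hf : Differentiable ℝ f) {a L : ℝ}
    (hfa : Tendsto f atTop (𝓝 a)) (hL : Tendsto (fun t => deriv f t ^ 2) atTop (𝓝 L)) :
    L = 0 := by
  by_contra hL0
  have hLpos : 0 < L := (ge_of_tendsto' hL fun t => sq_nonneg _).lt_of_ne' hL0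
  have hincr : Tendsto (fun t => (f (t + 1) - f t) ^ 2) atTop (𝓝 0) := by
    simpa using ((hfa.comp (tendsto_atTop_add_const_right _ 1 tendsto_id)).sub hfa).pow 2
  have hmvt : ∀ t, ∃ s > t, (f (t + 1) - f t) ^ 2 = deriv f s ^ 2 := fun t => by
    obtain ⟨s, hs, hslope⟩ := exists_deriv_eq_slope f (lt_add_one t) hf.continuous.continuousOn
      hf.differentiableOn
    exact ⟨s, hs.1, by rw [hslope, add_sub_cancel_left, div_one]⟩
  obtain ⟨T, hT⟩ := eventually_atTop.mp (hL.eventually (lt_mem_nhds (half_lt_self hLpos)))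
  have hge : ∀ t ≥ T, L / 2 ≤ (f (t + 1) - f t) ^ 2 := fun t ht => by
    obtain ⟨s, hst, hs⟩ := hmvt t
    exact hs ▸ (hT s (ht.trans hst.le)).le
  linarith [ge_of_tendsto hincr (eventually_atTop.mpr ⟨T, hge⟩)]

section Gronwall

variable {E : Type*} [NormedAddCommGroup E] [NormedSpace ℝ E] {f f' : ℝ → E} {k : ℝ → ℝ}

lemma eq_zero_of_norm_deriv_le_mul_norm_of_le (hf : ∀ t, HasDerivAt f (f' t) t)
    (hk : Continuous k) (bound : ∀ t, ‖f' t‖ ≤ k t * ‖f t‖) {t₀ t : ℝ} (h₀ : f t₀ = 0)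
    (ht : t₀ ≤ t) : f t = 0 := by
  obtain ⟨K, hK⟩ := isCompact_Icc.exists_bound_of_continuousOn (s := Icc t₀ t) hk.continuousOn
  refine eq_zero_of_abs_deriv_le_mul_abs_self_of_eq_zero_right (K := K)
    (HasDerivAt.continuousOn fun s _ => hf s) (fun s _ => (hf s).hasDerivWithinAt) h₀
    (fun s hs => ?_) t ⟨ht, le_rfl⟩
  calc ‖f' s‖ ≤ k s * ‖f s‖ := bound s
    _ ≤ K * ‖f s‖ := by
      gcongr
      exact (le_abs_self _).trans (hK s (Ico_subset_Icc_self hs))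

lemma eq_zero_of_norm_deriv_le_mul_norm (hf : ∀ t, HasDerivAt f (f' t) t)
    (hk : Continuous k) (bound : ∀ t, ‖f' t‖ ≤ k t * ‖f t‖) {t₀ : ℝ} (h₀ : f t₀ = 0) (t : ℝ) :
    f t = 0 := by
  rcases le_total t₀ t with ht | ht
  · exact eq_zero_of_norm_deriv_le_mul_norm_of_le hf hk bound h₀ ht
  · have hf_neg : ∀ s, HasDerivAt (fun s => f (-s)) (-f' (-s)) s := fun s => by
      simpa [Function.comp_def] using (hf (-s)).scomp s (hasDerivAt_neg s)
    simpa using eq_zero_of_norm_deriv_le_mul_norm_of_le hf_neg (hk.comp continuous_neg)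
      (fun s => by simpa using bound (-s)) (t₀ := -t₀) (by simpa using h₀) (neg_le_neg ht)

end Gronwall

namespace AllenCahn

variable {v : ℝ → ℝ}

lemma energy_eq (hv : ContDiff ℝ 2 v) (hode : ∀ t, deriv (deriv v) t + v t - v t ^ 3 = 0)
    (t : ℝ) : deriv v t ^ 2 + v t ^ 2 - v t ^ 4 / 2 = deriv v 0 ^ 2 + v 0 ^ 2 - v 0 ^ 4 / 2 := by
  have hd : ∀ s, HasDerivAt (fun s => deriv v s ^ 2 + v s ^ 2 - v s ^ 4 / 2) 0 s := fun s => by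
    have h₁ := (hv.differentiable two_ne_zero s).hasDerivAt
    have h₂ := (hv.differentiable_deriv_two s).hasDerivAt
    refine (((h₂.fun_pow 2).add (h₁.fun_pow 2)).sub ((h₁.fun_pow 4).div_const 2)).congr_deriv ?_
    linear_combination 2 * deriv v s * hode s
  exact is_const_of_deriv_eq_zero (fun s => (hd s).differentiableAt) (fun s => (hd s).deriv) t 0

lemma sq_deriv_eq (hv : ContDiff ℝ 2 v) (hode : ∀ t, deriv (deriv v) t + v t - v t ^ 3 = 0)
    (htop : Tendsto v atTop (𝓝 1)) (t : ℝ) : deriv v t ^ 2 = (1 - v t ^ 2) ^ 2 / 2 := by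
  set e := deriv v 0 ^ 2 + v 0 ^ 2 - v 0 ^ 4 / 2
  have hlim : Tendsto (fun t => deriv v t ^ 2) atTop (𝓝 (e - 1 / 2)) := by
    have := (tendsto_const_nhds (x := e)).sub ((htop.pow 2).sub ((htop.pow 4).div_const 2))
    refine this.congr' (Eventually.of_forall fun s => ?_) |>.trans (le_of_eq (by norm_num))
    linear_combination -(energy_eq hv hode s)
  have he := eq_zero_of_tendsto_sq_deriv (hv.differentiable two_ne_zero) htop hlim
  linear_combination energy_eq hv hode t + he

lemma sq_lt_one (hv : ContDiff ℝ 2 v) (hode : ∀ t, deriv (deriv v) t + v t - v t ^ 3 = 0)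
    (htop : Tendsto v atTop (𝓝 1)) (hv0 : v 0 = 0) (t : ℝ) : v t ^ 2 < 1 := by
  have hv' := hv.differentiable two_ne_zero
  have hw : ∀ s, HasDerivAt (fun s => 1 - v s ^ 2) (-(2 * v s * deriv v s)) s := fun s => by
    simpa using ((hv' s).hasDerivAt.fun_pow 2).const_sub 1
  have hbound : ∀ s, ‖-(2 * v s * deriv v s)‖ ≤ 2 * |v s| * ‖1 - v s ^ 2‖ := fun s => by
    have : |deriv v s| ≤ |1 - v s ^ 2| :=
      sq_le_sq.mp (by nlinarith [sq_deriv_eq hv hode htop s, sq_nonneg (1 - v s ^ 2)])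
    simp only [norm_neg, norm_mul, Real.norm_eq_abs, abs_two]
    gcongr
  have hne : ∀ s, 1 - v s ^ 2 ≠ 0 := fun s hs => by
    simpa [hv0] using eq_zero_of_norm_deriv_le_mul_norm hw
      (continuous_const.mul hv'.continuous.abs) hbound hs 0
  by_contra! ht
  have hvc := hv'.continuous
  obtain ⟨s, -, hs⟩ := intermediate_value_uIcc (a := 0) (b := t) (f := fun s => 1 - v s ^ 2)
    (by fun_prop) (show (0 : ℝ) ∈ uIcc (1 - v 0 ^ 2) (1 - v t ^ 2) from
      mem_uIcc.mpr (Or.inr ⟨by linarith, by simp [hv0]⟩))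
  exact hne s hs

lemma deriv_eq (hv : ContDiff ℝ 2 v) (hode : ∀ t, deriv (deriv v) t + v t - v t ^ 3 = 0)
    (htop : Tendsto v atTop (𝓝 1)) (hv0 : v 0 = 0) : deriv v = fun t => (1 - v t ^ 2) / √2 := by
  have hv' := hv.differentiable two_ne_zero
  have hvc := hv'.continuous
  have hsq : EqOn (deriv v ^ 2) ((fun t => (1 - v t ^ 2) / √2) ^ 2) univ := fun t _ => by
    simp [div_pow, sq_deriv_eq hv hode htop t]
  have hne : ∀ {t}, t ∈ univ → (1 - v t ^ 2) / √2 ≠ 0 := fun {t} _ => by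
    have := sq_lt_one hv hode htop hv0 t
    positivity
  rcases isPreconnected_univ.eq_or_eq_neg_of_sq_eq
    hv.differentiable_deriv_two.continuous.continuousOn (by fun_prop) hsq hne with h | h
  · exact funext fun t => h (mem_univ t)
  · have hanti : Antitone v := antitone_of_deriv_nonpos hv' fun t => by
      have := sq_lt_one hv hode htop hv0 t
      rw [h (mem_univ t), Pi.neg_apply, neg_nonpos]
      positivity
    have := le_of_tendsto htop (eventually_atTop.mpr ⟨0, fun t ht => (hanti ht).trans hv0.le⟩)
    norm_num at this

lemma eq_u₁ (hv : ContDiff ℝ 2 v) (hode : ∀ t, deriv (deriv v) t + v t - v t ^ 3 = 0)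
    (htop : Tendsto v atTop (𝓝 1)) (hv0 : v 0 = 0) : v = u₁ := by
  have hmem : ∀ {w : ℝ → ℝ}, (∀ t, w t ^ 2 < 1) → ∀ t, w t ∈ Icc (-1) 1 := fun hw t =>
    ⟨by nlinarith [hw t], by nlinarith [hw t]⟩
  refine ODE_solution_unique_univ (v := fun _ y => (1 - y ^ 2) / √2) (s := fun _ => Icc (-1) 1)
    (t₀ := 0) (fun _ => lipschitzOnWith_one_sub_sq_div_sqrt_two)
    (fun t => ⟨?_, hmem (sq_lt_one hv hode htop hv0) t⟩)
    (fun t => ⟨hasDerivAt_u₁ t, hmem (fun t => tanh_sq_lt_one _) t⟩) (by simp [hv0, u₁])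
  simpa [deriv_eq hv hode htop hv0] using (hv.differentiable two_ne_zero t).hasDerivAt

end AllenCahn

/-- `u₁(t) = tanh(t/√2)` solves `u'' + u - u³ = 0`, vanishes at `0`, tends to `±1` at `±∞`,
and is the unique such solution. -/
theorem u₁_solves_and_unique :
    (∀ t : ℝ, deriv (deriv u₁) t + u₁ t - (u₁ t) ^ 3 = 0) ∧
    u₁ 0 = 0 ∧
    Tendsto u₁ atTop (nhds 1) ∧
    Tendsto u₁ atBot (nhds (-1)) ∧
    (∀ v : ℝ → ℝ, ContDiff ℝ 2 v →
      (∀ t : ℝ, deriv (deriv v) t + v t - (v t) ^ 3 = 0) →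
      v 0 = 0 →
      Tendsto v atTop (nhds 1) →
      Tendsto v atBot (nhds (-1)) →
      v = u₁) :=
  ⟨deriv_deriv_u₁_add_sub_pow_three, by simp [u₁], tendsto_u₁_atTop, tendsto_u₁_atBot,
    fun _ hv hode hv0 htop _ => AllenCahn.eq_u₁ hv hode htop hv0⟩
end

section
/- Let n ≥ 1 and let u₁(t) = tanh(t/√2). Suppose w : ℝⁿ × ℝ → ℝ is smooth, bounded, satisfies Δ_y w + ∂_t² w + (1 - 3 u₁(t)²) w = 0 on ℝⁿ × ℝ, and satisfies the orthogonality condition ∫_ℝ w(y,t) u₁'(t) dt = 0 for every y ∈ ℝⁿ. Then for every σ ∈ (0, √2) there exists a constant C > 0 such that |w(y,t)| ≤ C e^{-σ|t|} for all (y,t) ∈ ℝⁿ × ℝ. -/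
/-- Second directional derivative of `f` at `x` in the direction `v`. -/
noncomputable def D2 {E : Type*} [NormedAddCommGroup E] [NormedSpace ℝ E]
    (f : E → ℝ) (x v : E) : ℝ :=
  fderiv ℝ (fun y => fderiv ℝ f y v) x v

open Real Filter Topology Set Bornology

theorem deriv_deriv_nonpos_of_isLocalMax {φ : ℝ → ℝ} {x₀ : ℝ} (hφ : Differentiable ℝ φ)
    (h : IsLocalMax φ x₀) : deriv (deriv φ) x₀ ≤ 0 := by
  by_contra! hpos
  have hright : ∀ᶠ x in 𝓝[>] x₀, 0 < deriv φ x :=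
    deriv_pos_right_of_sign_deriv <| nhdsWithin_le_nhds <|
      eventually_nhdsWithin_sign_eq_of_deriv_pos hpos h.deriv_eq_zero
  obtain ⟨b, hb, hsub⟩ := mem_nhdsGT_iff_exists_Ioo_subset.mp hright
  have hincr : ∀ᶠ x in 𝓝[>] x₀, φ x₀ < φ x := by
    filter_upwards [Ioo_mem_nhdsGT hb] with x hx
    obtain ⟨c, hc, hslope⟩ := exists_deriv_eq_slope φ hx.1 hφ.continuous.continuousOn
      hφ.differentiableOn
    have hc' : 0 < (φ x - φ x₀) / (x - x₀) := hslope ▸ hsub ⟨hc.1, hc.2.trans hx.2⟩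
    linarith [(div_pos_iff_of_pos_right (sub_pos.2 hx.1)).mp hc']
  have hmax : ∀ᶠ x in 𝓝[>] x₀, φ x ≤ φ x₀ := nhdsWithin_le_nhds h
  obtain ⟨x, hle, hlt⟩ := (hmax.and hincr).exists
  exact hle.not_gt hlt

section D2

variable {F G : Type*} [NormedAddCommGroup F] [NormedSpace ℝ F]
  [NormedAddCommGroup G] [NormedSpace ℝ G]

theorem ContDiff.differentiable_fderiv_apply {f : F → ℝ} (hf : ContDiff ℝ 2 f) (u : F) :
    Differentiable ℝ fun x => fderiv ℝ f x u :=
  ((hf.fderiv_right (m := 1) (by norm_num)).clm_apply contDiff_const).differentiable one_ne_zero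

theorem D2_add {f g : F → ℝ} (hf : ContDiff ℝ 2 f) (hg : ContDiff ℝ 2 g) (p u : F) :
    D2 (fun x => f x + g x) p u = D2 f p u + D2 g p u := by
  have hfd := hf.differentiable two_ne_zero
  have hgd := hg.differentiable two_ne_zero
  have h : (fun x => fderiv ℝ (fun x => f x + g x) x u)
      = fun x => fderiv ℝ f x u + fderiv ℝ g x u := by
    funext x
    simp [fderiv_fun_add (hfd x) (hgd x)]
  rw [D2, h, fderiv_fun_add (hf.differentiable_fderiv_apply u p)
    (hg.differentiable_fderiv_apply u p)]
  rfl

theorem D2_neg (f : F → ℝ) (p u : F) : D2 (fun x => -f x) p u = -D2 f p u := by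
  have h : (fun x => fderiv ℝ (fun x => -f x) x u) = fun x => -fderiv ℝ f x u := by
    funext x
    simp [fderiv_fun_neg]
  rw [D2, h, fderiv_fun_neg]
  rfl

theorem D2_sub {f g : F → ℝ} (hf : ContDiff ℝ 2 f) (hg : ContDiff ℝ 2 g) (p u : F) :
    D2 (fun x => f x - g x) p u = D2 f p u - D2 g p u := by
  simpa [sub_eq_add_neg, D2_neg] using D2_add hf hg.neg p u

theorem D2_neg_right (f : F → ℝ) (p u : F) : D2 f p (-u) = D2 f p u := by
  have h : (fun x => fderiv ℝ f x (-u)) = fun x => -fderiv ℝ f x u := by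
    funext x
    simp
  rw [D2, h, fderiv_fun_neg]
  simp [D2]

theorem D2_sum {ι : Type*} (s : Finset ι) {f : ι → F → ℝ} (hf : ∀ i, ContDiff ℝ 2 (f i))
    (p u : F) : D2 (fun x => ∑ i ∈ s, f i x) p u = ∑ i ∈ s, D2 (f i) p u := by
  have h : (fun x => fderiv ℝ (fun x => ∑ i ∈ s, f i x) x u)
      = fun x => ∑ i ∈ s, fderiv ℝ (f i) x u := by
    funext x
    simp [fderiv_fun_sum fun i _ => (hf i).differentiable two_ne_zero x]
  rw [D2, h, fderiv_fun_sum fun i _ => (hf i).differentiable_fderiv_apply u p]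
  simp [D2]

theorem D2_comp_add_clm {f : G → ℝ} (hf : ContDiff ℝ 2 f) (c : G) (L : F →L[ℝ] G) (p u : F) :
    D2 (fun x => f (c + L x)) p u = D2 f (c + L p) (L u) := by
  have hcomp : ∀ h : G → ℝ, Differentiable ℝ h →
      ∀ x, fderiv ℝ (fun x => h (c + L x)) x = (fderiv ℝ h (c + L x)).comp L :=
    fun h hh x => ((hh _).hasFDerivAt.comp x (L.hasFDerivAt.const_add c)).fderiv
  have h : (fun x => fderiv ℝ (fun x => f (c + L x)) x u)
      = fun x => fderiv ℝ f (c + L x) (L u) := by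
    funext x
    rw [hcomp f (hf.differentiable two_ne_zero)]
    rfl
  rw [D2, h, hcomp _ (hf.differentiable_fderiv_apply (L u))]
  rfl

theorem D2_eq_deriv_deriv_mul_sq {φ : ℝ → ℝ} (hφ : ContDiff ℝ 2 φ) (s r : ℝ) :
    D2 φ s r = deriv (deriv φ) s * r ^ 2 := by
  simp only [D2, fderiv_eq_smul_deriv, smul_eq_mul]
  rw [deriv_const_mul _ (hφ.differentiable_deriv_two s)]
  ring

theorem D2_comp_clm_eq_deriv_deriv_mul_sq {φ : ℝ → ℝ} (hφ : ContDiff ℝ 2 φ) (L : F →L[ℝ] ℝ)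
    (p u : F) :
    D2 (fun x => φ (L x)) p u = deriv (deriv φ) (L p) * L u ^ 2 := by
  simpa [D2_eq_deriv_deriv_mul_sq hφ] using D2_comp_add_clm hφ 0 L p u

theorem D2_nonpos_of_isLocalMax {f : F → ℝ} {a : F} (hf : ContDiff ℝ 2 f) (h : IsLocalMax f a)
    (u : F) : D2 f a u ≤ 0 := by
  set L : ℝ →L[ℝ] F := ContinuousLinearMap.toSpanSingleton ℝ u
  have hφ : ContDiff ℝ 2 fun s => f (a + L s) := hf.comp (contDiff_const.add L.contDiff)
  have hmax : IsLocalMax (fun s => f (a + L s)) 0 :=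
    IsLocalMax.comp_continuous (by simpa [L] using h) (by fun_prop)
  have hline : D2 f a u = D2 (fun s => f (a + L s)) 0 1 := by
    rw [D2_comp_add_clm hf a L 0 1]
    simp [L]
  rw [hline, D2_eq_deriv_deriv_mul_sq hφ]
  simpa using deriv_deriv_nonpos_of_isLocalMax (hφ.differentiable two_ne_zero) hmax

end D2

noncomputable def expComb (σ a b s : ℝ) : ℝ := a * exp (σ * s) + b * exp (-σ * s)

theorem hasDerivAt_expComb (σ a b s : ℝ) :
    HasDerivAt (expComb σ a b) (expComb σ (σ * a) (-σ * b) s) s := by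
  have h := (((hasDerivAt_id' s).const_mul σ).exp.const_mul a).fun_add
    (((hasDerivAt_id' s).const_mul (-σ)).exp.const_mul b)
  refine h.congr_deriv ?_
  unfold expComb
  ring

theorem deriv_deriv_expComb (σ a b s : ℝ) :
    deriv (deriv (expComb σ a b)) s = σ ^ 2 * expComb σ a b s := by
  rw [funext fun s => (hasDerivAt_expComb σ a b s).deriv, (hasDerivAt_expComb σ _ _ s).deriv]
  unfold expComb
  ring

theorem contDiff_expComb (σ a b : ℝ) : ContDiff ℝ 2 (expComb σ a b) := by
  unfold expComb
  fun_prop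

theorem two_add_sq_div_two_le_exp_add_exp_neg (x : ℝ) : 2 + x ^ 2 / 2 ≤ exp x + exp (-x) := by
  wlog hx : 0 ≤ x generalizing x
  · simpa [add_comm] using this (-x) (by linarith)
  linarith [quadratic_le_exp_of_nonneg hx, add_one_le_exp (-x)]

theorem interior_snd_preimage_Ici {α : Type*} [TopologicalSpace α] (T : ℝ) :
    interior (Prod.snd ⁻¹' Ici T : Set (α × ℝ)) = {q | T < q.2} := by
  rw [← isOpenMap_snd.preimage_interior_eq_interior_preimage continuous_snd, interior_Ici]
  rfl

theorem frontier_snd_preimage_Ici {α : Type*} [TopologicalSpace α] (T : ℝ) :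
    frontier (Prod.snd ⁻¹' Ici T : Set (α × ℝ)) = {q | q.2 = T} := by
  rw [← isOpenMap_snd.preimage_frontier_eq_frontier_preimage continuous_snd, frontier_Ici]
  rfl

section CoordLaplacian

variable {ι : Type*} [Fintype ι] [DecidableEq ι]

noncomputable def coordLaplacian (f : EuclideanSpace ℝ ι × ℝ → ℝ) (p : EuclideanSpace ℝ ι × ℝ) :
    ℝ :=
  ∑ i, D2 f p (EuclideanSpace.single i 1, 0) + D2 f p (0, 1)

theorem coordLaplacian_sub {f g : EuclideanSpace ℝ ι × ℝ → ℝ} (hf : ContDiff ℝ 2 f)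
    (hg : ContDiff ℝ 2 g) (p : EuclideanSpace ℝ ι × ℝ) :
    coordLaplacian (fun x => f x - g x) p = coordLaplacian f p - coordLaplacian g p := by
  simp only [coordLaplacian, D2_sub hf hg, Finset.sum_sub_distrib]
  ring

theorem coordLaplacian_neg (f : EuclideanSpace ℝ ι × ℝ → ℝ) (p : EuclideanSpace ℝ ι × ℝ) :
    coordLaplacian (fun x => -f x) p = -coordLaplacian f p := by
  simp only [coordLaplacian, D2_neg, Finset.sum_neg_distrib]
  ring

theorem coordLaplacian_comp_neg_snd {f : EuclideanSpace ℝ ι × ℝ → ℝ} (hf : ContDiff ℝ 2 f)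
    (p : EuclideanSpace ℝ ι × ℝ) :
    coordLaplacian (fun x => f (x.1, -x.2)) p = coordLaplacian f (p.1, -p.2) := by
  let R : EuclideanSpace ℝ ι × ℝ →L[ℝ] EuclideanSpace ℝ ι × ℝ :=
    (ContinuousLinearMap.fst ℝ _ ℝ).prod (-ContinuousLinearMap.snd ℝ _ ℝ)
  have h : ∀ u, D2 (fun x => f (x.1, -x.2)) p u = D2 f (p.1, -p.2) (u.1, -u.2) := fun u => by
    simpa [R] using D2_comp_add_clm hf 0 R p u
  simp only [coordLaplacian, h, neg_zero]
  rw [show ((0 : EuclideanSpace ℝ ι), (-1 : ℝ)) = -(0, 1) by simp, D2_neg_right]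

theorem coordLaplacian_nonpos_of_isLocalMax {g : EuclideanSpace ℝ ι × ℝ → ℝ}
    {p : EuclideanSpace ℝ ι × ℝ} (hg : ContDiff ℝ 2 g) (h : IsLocalMax g p) :
    coordLaplacian g p ≤ 0 :=
  add_nonpos (Finset.sum_nonpos fun _ _ => D2_nonpos_of_isLocalMax hg h _)
    (D2_nonpos_of_isLocalMax hg h _)

noncomputable def sepSum (f g : ℝ → ℝ) (p : EuclideanSpace ℝ ι × ℝ) : ℝ :=
  f p.2 + ∑ j, g (p.1 j)

omit [DecidableEq ι] in
theorem contDiff_sepSum {f g : ℝ → ℝ} (hf : ContDiff ℝ 2 f) (hg : ContDiff ℝ 2 g) :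
    ContDiff ℝ 2 (sepSum (ι := ι) f g) :=
  (hf.comp contDiff_snd).add <| ContDiff.sum fun j _ => hg.comp (by fun_prop)

theorem coordLaplacian_sepSum {f g : ℝ → ℝ} (hf : ContDiff ℝ 2 f) (hg : ContDiff ℝ 2 g)
    (p : EuclideanSpace ℝ ι × ℝ) :
    coordLaplacian (sepSum f g) p = sepSum (deriv (deriv f)) (deriv (deriv g)) p := by
  have hfc : ContDiff ℝ 2 fun x : EuclideanSpace ℝ ι × ℝ => f x.2 := hf.comp contDiff_snd
  have hgc : ∀ j, ContDiff ℝ 2 fun x : EuclideanSpace ℝ ι × ℝ => g (x.1 j) :=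
    fun j => hg.comp (by fun_prop)
  have hD2 : ∀ u, D2 (sepSum f g) p u
      = deriv (deriv f) p.2 * u.2 ^ 2 + ∑ j, deriv (deriv g) (p.1 j) * u.1 j ^ 2 := by
    intro u
    have hgL := fun j => D2_comp_clm_eq_deriv_deriv_mul_sq hg
      ((EuclideanSpace.proj j).comp (ContinuousLinearMap.fst ℝ (EuclideanSpace ℝ ι) ℝ)) p u
    simp only [ContinuousLinearMap.coe_comp, Function.comp_apply, ContinuousLinearMap.coe_fst',
      PiLp.proj_apply] at hgL
    show D2 (fun x => f x.2 + ∑ j, g (x.1 j)) p u = _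
    rw [D2_add hfc (ContDiff.sum fun j _ => hgc j), D2_sum _ hgc]
    simp only [hgL]
    exact congrArg (· + _)
      (D2_comp_clm_eq_deriv_deriv_mul_sq hf (ContinuousLinearMap.snd ℝ _ ℝ) p u)
  simp [coordLaplacian, hD2, sepSum]
  ring

theorem coordLaplacian_sepSum_expComb (σ a b c d : ℝ) (p : EuclideanSpace ℝ ι × ℝ) :
    coordLaplacian (sepSum (expComb σ a b) (expComb σ c d)) p
      = σ ^ 2 * sepSum (expComb σ a b) (expComb σ c d) p := by
  simp [coordLaplacian_sepSum (contDiff_expComb σ a b) (contDiff_expComb σ c d), sepSum,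
    deriv_deriv_expComb, Finset.mul_sum, mul_add]

omit [DecidableEq ι] in
theorem isBounded_setOf_sepSum_expComb_le {σ : ℝ} (hσ : 0 < σ) (R : ℝ) :
    IsBounded {p : EuclideanSpace ℝ ι × ℝ | sepSum (expComb σ 1 1) (expComb σ 1 1) p ≤ R} := by
  refine isBounded_iff_forall_norm_le.2 ⟨1 + 2 * R / σ ^ 2, fun p hp => ?_⟩
  have hcoord : ∀ x : ℝ, (σ * x) ^ 2 ≤ 2 * expComb σ 1 1 x := fun x => by
    have := two_add_sq_div_two_le_exp_add_exp_neg (σ * x)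
    simp only [expComb, one_mul, neg_mul]
    linarith
  have hy : (σ * ‖p.1‖) ^ 2 ≤ 2 * ∑ j, expComb σ 1 1 (p.1 j) := by
    rw [mul_pow, EuclideanSpace.norm_sq_eq, Finset.mul_sum, Finset.mul_sum]
    exact Finset.sum_le_sum fun j _ => by simpa [mul_pow] using hcoord (p.1 j)
  have ht : (σ * ‖p.2‖) ^ 2 ≤ 2 * expComb σ 1 1 p.2 := by simpa [mul_pow] using hcoord p.2
  have hmax : ‖p‖ ^ 2 ≤ ‖p.1‖ ^ 2 + ‖p.2‖ ^ 2 := by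
    rw [Prod.norm_def]
    rcases max_cases ‖p.1‖ ‖p.2‖ with ⟨h, _⟩ | ⟨h, _⟩ <;> rw [h] <;> nlinarith
  have hsq : ‖p‖ ^ 2 ≤ 2 * R / σ ^ 2 := by
    rw [le_div_iff₀ (by positivity)]
    simp only [sepSum, mem_ofPred_eq] at hp
    nlinarith
  nlinarith

theorem nonpos_of_coordLaplacian_pos {Ω : Set (EuclideanSpace ℝ ι × ℝ)}
    {g : EuclideanSpace ℝ ι × ℝ → ℝ} (hΩ : IsClosed Ω) (hg : ContDiff ℝ 2 g)
    (hbdd : ∀ c > 0, IsBounded {p ∈ Ω | c ≤ g p}) (hfr : ∀ p ∈ frontier Ω, g p ≤ 0)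
    (hlap : ∀ p ∈ interior Ω, 0 < g p → 0 < coordLaplacian g p) : ∀ p ∈ Ω, g p ≤ 0 := by
  by_contra! h
  obtain ⟨p₁, hp₁Ω, hp₁⟩ := h
  have hS : IsCompact {p ∈ Ω | g p₁ ≤ g p} :=
    Metric.isCompact_of_isClosed_isBounded (hΩ.inter (isClosed_le continuous_const hg.continuous))
      (hbdd _ hp₁)
  obtain ⟨p₀, ⟨hp₀Ω, hp₀⟩, hmax⟩ := hS.exists_isMaxOn ⟨p₁, hp₁Ω, le_rfl⟩ hg.continuous.continuousOn
  have hpos : 0 < g p₀ := hp₁.trans_le hp₀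
  have hint : p₀ ∈ interior Ω := by
    by_contra hnot
    exact (hfr p₀ ⟨subset_closure hp₀Ω, hnot⟩).not_gt hpos
  have hloc : IsLocalMax g p₀ := by
    filter_upwards [isOpen_interior.mem_nhds hint] with p hp
    by_cases hp₁p : g p₁ ≤ g p
    · exact hmax ⟨interior_subset hp, hp₁p⟩
    · exact (not_le.mp hp₁p).le.trans hp₀
  exact (coordLaplacian_nonpos_of_isLocalMax hg hloc).not_gt (hlap p₀ hint hpos)

omit [DecidableEq ι] in
theorem sepSum_expComb_one_one_pos (σ : ℝ) (p : EuclideanSpace ℝ ι × ℝ) :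
    0 < sepSum (expComb σ 1 1) (expComb σ 1 1) p := by
  simp only [sepSum, expComb]
  positivity

theorem le_add_mul_sepSum_of_coordLaplacian_ge {v : EuclideanSpace ℝ ι × ℝ → ℝ} {σ T M ε : ℝ}
    (hσ : 0 < σ) (hM : 0 ≤ M) (hε : 0 < ε) (hv : ContDiff ℝ 2 v) (hvM : ∀ p, v p ≤ M)
    (hlap : ∀ p, T < p.2 → 0 < v p → σ ^ 2 * v p ≤ coordLaplacian v p)
    (p : EuclideanSpace ℝ ι × ℝ) (hpT : T ≤ p.2) :
    v p ≤ M * exp (σ * T) * exp (-σ * p.2) + ε * sepSum (expComb σ 1 1) (expComb σ 1 1) p := by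
  set Ψ := sepSum (ι := ι) (expComb σ 1 1) (expComb σ 1 1)
  set Φ := sepSum (ι := ι) (expComb σ ε (M * exp (σ * T) + ε)) (expComb σ ε ε)
  have hΦ : ∀ q, Φ q = M * exp (σ * T) * exp (-σ * q.2) + ε * Ψ q := fun q => by
    simp only [Φ, Ψ, sepSum, expComb, one_mul, mul_add, Finset.mul_sum, Finset.sum_add_distrib]
    ring
  have hΦc : ContDiff ℝ 2 Φ := contDiff_sepSum (contDiff_expComb _ _ _) (contDiff_expComb _ _ _)
  have hΨ := sepSum_expComb_one_one_pos (ι := ι) σ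
  have key : v p - Φ p ≤ 0 := by
    refine nonpos_of_coordLaplacian_pos (g := fun q => v q - Φ q)
      (isClosed_Ici.preimage continuous_snd) (hv.sub hΦc) (fun c _ => ?_) (fun q hq => ?_)
      (fun q hq hpos => ?_) p hpT
    · refine (isBounded_setOf_sepSum_expComb_le hσ (M / ε)).subset fun q hq => ?_
      rw [mem_ofPred_eq, le_div_iff₀ hε]
      have : 0 ≤ M * exp (σ * T) * exp (-σ * q.2) := by positivity
      linarith [hq.2, hΦ q, hvM q]
    · rw [frontier_snd_preimage_Ici] at hq
      have hbdry : M * exp (σ * T) * exp (-σ * q.2) = M := by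
        rw [show q.2 = T from hq, mul_assoc, ← exp_add]
        simp
      nlinarith [hΨ q, hΦ q, hvM q]
    · rw [interior_snd_preimage_Ici] at hq
      rw [coordLaplacian_sub hv hΦc, coordLaplacian_sepSum_expComb]
      have hΦpos : 0 < Φ q := by
        rw [hΦ]
        have := hΨ q
        positivity
      have hvq := hlap q hq (by linarith)
      nlinarith [mul_pos (pow_pos hσ 2) hpos]
  linarith [hΦ p]

theorem le_mul_exp_of_coordLaplacian_ge {v : EuclideanSpace ℝ ι × ℝ → ℝ} {σ T M : ℝ}
    (hσ : 0 < σ) (hM : 0 ≤ M) (hv : ContDiff ℝ 2 v) (hvM : ∀ p, v p ≤ M)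
    (hlap : ∀ p, T < p.2 → 0 < v p → σ ^ 2 * v p ≤ coordLaplacian v p)
    (p : EuclideanSpace ℝ ι × ℝ) : v p ≤ M * exp (σ * T) * exp (-σ * p.2) := by
  rcases lt_or_ge p.2 T with hpT | hpT
  · calc v p ≤ M := hvM p
      _ ≤ M * exp (σ * (T - p.2)) := le_mul_of_one_le_right hM (one_le_exp (by nlinarith))
      _ = M * exp (σ * T) * exp (-σ * p.2) := by rw [mul_assoc, ← exp_add]; ring_nf
  have hΨ := sepSum_expComb_one_one_pos (ι := ι) σ p
  refine le_of_forall_pos_le_add fun δ hδ => ?_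
  have := le_add_mul_sepSum_of_coordLaplacian_ge hσ hM (div_pos hδ hΨ) hv hvM hlap p hpT
  rwa [div_mul_cancel₀ _ hΨ.ne'] at this

theorem abs_le_mul_exp_of_coordLaplacian_eq {v q : EuclideanSpace ℝ ι × ℝ → ℝ} {σ T M : ℝ}
    (hσ : 0 < σ) (hM : 0 ≤ M)
    (hv : ContDiff ℝ 2 v) (hvM : ∀ p, |v p| ≤ M) (hq : ∀ p, T < p.2 → σ ^ 2 ≤ q p)
    (heq : ∀ p, T < p.2 → coordLaplacian v p = q p * v p) (p : EuclideanSpace ℝ ι × ℝ) :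
    |v p| ≤ M * exp (σ * T) * exp (-σ * p.2) := by
  have hupper : ∀ u : EuclideanSpace ℝ ι × ℝ → ℝ, ContDiff ℝ 2 u → (∀ p, u p ≤ M) →
      (∀ p, T < p.2 → coordLaplacian u p = q p * u p) →
      u p ≤ M * exp (σ * T) * exp (-σ * p.2) :=
    fun u hu huM hueq => le_mul_exp_of_coordLaplacian_ge hσ hM hu huM (fun p hp hpos =>
      (hueq p hp).symm ▸ mul_le_mul_of_nonneg_right (hq p hp) hpos.le) p
  refine abs_le.2 ⟨neg_le.1 (hupper (fun x => -v x) hv.neg (fun p => (neg_le_abs _).trans (hvM p))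
    fun p hp => ?_), hupper v hv (fun p => le_of_abs_le (hvM p)) heq⟩
  rw [coordLaplacian_neg, heq p hp]
  ring

end CoordLaplacian

theorem tendsto_cosh_atTop : Tendsto cosh atTop atTop :=
  tendsto_atTop_mono (fun x => by rw [cosh_eq]; linarith [exp_pos (-x)])
    (tendsto_exp_atTop.atTop_div_const two_pos)

theorem three_mul_tanh_sq_sub_one (x : ℝ) : 3 * tanh x ^ 2 - 1 = 2 - 3 * (cosh x)⁻¹ ^ 2 := by
  have := cosh_sq x
  rw [tanh_eq_sinh_div_cosh]
  field_simp
  linarith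

theorem tendsto_three_mul_u₁_sq_sub_one :
    Tendsto (fun t => 3 * u₁ t ^ 2 - 1) atTop (𝓝 2) := by
  have h := (((tendsto_inv_atTop_zero.comp (tendsto_cosh_atTop.comp
    (tendsto_id.atTop_div_const (sqrt_pos.2 two_pos)))).pow 2).const_mul 3).const_sub 2
  simpa [u₁, three_mul_tanh_sq_sub_one] using h

theorem u₁_neg (t : ℝ) : u₁ (-t) = -u₁ t := by
  simp [u₁, neg_div, tanh_neg]

theorem exponential_decay_of_orthogonal_kernel_general (n : ℕ)
    (w : EuclideanSpace ℝ (Fin n) × ℝ → ℝ)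
    (hw : ContDiff ℝ (⊤ : ℕ∞) w) (hb : ∃ C : ℝ, ∀ p, |w p| ≤ C)
    (heq : ∀ p : EuclideanSpace ℝ (Fin n) × ℝ,
      (∑ i, D2 w p (EuclideanSpace.single i 1, 0)) + D2 w p (0, 1)
        + (1 - 3 * (u₁ p.2) ^ 2) * w p = 0) :
    ∀ σ ∈ Set.Ioo (0 : ℝ) (Real.sqrt 2), ∃ C : ℝ, 0 < C ∧
      ∀ p : EuclideanSpace ℝ (Fin n) × ℝ, |w p| ≤ C * Real.exp (-σ * |p.2|) := by
  rintro σ ⟨hσ, hσ2⟩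
  obtain ⟨M, hM⟩ := hb
  have hM0 : 0 ≤ M := (abs_nonneg _).trans (hM 0)
  obtain ⟨T, hT⟩ := eventually_atTop.1 <|
    tendsto_three_mul_u₁_sq_sub_one.eventually_const_le ((lt_sqrt hσ.le).1 hσ2)
  have hw2 : ContDiff ℝ 2 w := hw.of_le (by norm_cast)
  have hweq : ∀ p, coordLaplacian w p = (3 * u₁ p.2 ^ 2 - 1) * w p := fun p => by
    unfold coordLaplacian
    linarith [heq p]
  have hdecay : ∀ v : EuclideanSpace ℝ (Fin n) × ℝ → ℝ, ContDiff ℝ 2 v → (∀ p, |v p| ≤ M) →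
      (∀ p, coordLaplacian v p = (3 * u₁ p.2 ^ 2 - 1) * v p) →
      ∀ p, |v p| ≤ M * exp (σ * T) * exp (-σ * p.2) := fun v hv hvM hveq =>
    abs_le_mul_exp_of_coordLaplacian_eq hσ hM0 hv hvM (fun p hp => hT p.2 hp.le) fun p _ => hveq p
  refine ⟨(M + 1) * exp (σ * T), by positivity, fun p => ?_⟩
  have key : |w p| ≤ M * exp (σ * T) * exp (-σ * |p.2|) := by
    rcases le_total 0 p.2 with h | h
    · simpa [abs_of_nonneg h] using hdecay w hw2 hM hweq p
    · simpa [abs_of_nonpos h] using hdecay (fun x => w (x.1, -x.2)) (hw2.comp (by fun_prop))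
        (fun x => hM _) (fun x => by rw [coordLaplacian_comp_neg_snd hw2, hweq, u₁_neg, neg_sq])
        (p.1, -p.2)
  exact key.trans (by gcongr; linarith)

/-- Exponential decay of bounded solutions of `Δ_y w + ∂_t² w + (1 - 3u₁²) w = 0` on
`ℝⁿ × ℝ` which are fiberwise `L²`-orthogonal to `u₁'` (intermediate claim of
Lemma 8.2). -/
theorem exponential_decay_of_orthogonal_kernel (n : ℕ) (hn : 1 ≤ n)
    (w : EuclideanSpace ℝ (Fin n) × ℝ → ℝ)
    (hw : ContDiff ℝ (⊤ : ℕ∞) w) (hb : ∃ C : ℝ, ∀ p, |w p| ≤ C)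
    (heq : ∀ p : EuclideanSpace ℝ (Fin n) × ℝ,
      (∑ i, D2 w p (EuclideanSpace.single i 1, 0)) + D2 w p (0, 1)
        + (1 - 3 * (u₁ p.2) ^ 2) * w p = 0)
    (horth : ∀ y : EuclideanSpace ℝ (Fin n), ∫ t : ℝ, w (y, t) * deriv u₁ t = 0) :
    ∀ σ ∈ Set.Ioo (0 : ℝ) (Real.sqrt 2), ∃ C : ℝ, 0 < C ∧
      ∀ p : EuclideanSpace ℝ (Fin n) × ℝ, |w p| ≤ C * Real.exp (-σ * |p.2|) :=
  exponential_decay_of_orthogonal_kernel_general n w hw hb heq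
end

section
/- Let n ≥ 1 and let V : ℝⁿ → ℝ be a twice continuously differentiable function which is bounded, nonnegative, and satisfies ΔV(x) - (3/4) V(x) ≥ 0 for all x ∈ ℝⁿ. Then V ≡ 0. -/
/-!
Maximum principle with a quadratic barrier. For `ε > 0` the function `V - ε ‖·‖²` tends to `-∞`
at infinity (as `V` is bounded above), so it attains its maximum at some `z`, where its Laplacian
is `≤ 0`. Since `Δ ‖·‖² = 2n`, this gives `(3/4) V z ≤ Δ V z ≤ 2nε`, and then
`V x ≤ V z + ε ‖x‖² ≤ ε (8n/3 + ‖x‖²)` for every `x`. Letting `ε → 0` gives `V ≤ 0`.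
-/

open Filter Set Topology
open scoped RealInnerProductSpace

/-- The Euclidean Laplacian of a function on `ℝⁿ`, as the sum of second partial
derivatives in the coordinate directions. -/
noncomputable def lap {n : ℕ} (u : EuclideanSpace ℝ (Fin n) → ℝ)
    (x : EuclideanSpace ℝ (Fin n)) : ℝ :=
  ∑ i, fderiv ℝ (fun y => fderiv ℝ u y (EuclideanSpace.single i 1)) x (EuclideanSpace.single i 1)

theorem IsLocalMax.deriv_deriv_nonpos {f : ℝ → ℝ} {a : ℝ} (h : IsLocalMax f a)
    (hf : Differentiable ℝ f) : deriv (deriv f) a ≤ 0 := by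
  by_contra! hpos
  have hright : ∀ᶠ x in 𝓝[>] a, 0 < deriv f x :=
    deriv_pos_right_of_sign_deriv <| nhdsWithin_le_nhds <|
      eventually_nhdsWithin_sign_eq_of_deriv_pos hpos h.deriv_eq_zero
  obtain ⟨b, hab : a < b, hb⟩ :=
    mem_nhdsGT_iff_exists_Ioo_subset.mp (hright.and (nhdsWithin_le_nhds h))
  have hmono : StrictMonoOn f (Icc a b) :=
    strictMonoOn_of_deriv_pos (convex_Icc a b) hf.continuous.continuousOn
      (by simpa only [interior_Icc] using fun x hx => (hb hx).1)
  obtain ⟨x, hx⟩ := nonempty_Ioo.mpr hab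
  exact (hb hx).2.not_gt (hmono ⟨le_rfl, hab.le⟩ ⟨hx.1.le, hx.2.le⟩ hx.1)

section Directional

variable {E : Type*} [NormedAddCommGroup E] [NormedSpace ℝ E] {u : E → ℝ}

theorem ContDiff.differentiable_fderiv_apply_s10 (hu : ContDiff ℝ 2 u) (v : E) :
    Differentiable ℝ fun y => fderiv ℝ u y v :=
  ((hu.fderiv_right (m := 1) le_rfl).clm_apply contDiff_const).differentiable one_ne_zero

theorem deriv_deriv_comp_add_smul_zero (hu : ContDiff ℝ 2 u) (x v : E) :
    deriv (deriv fun t : ℝ => u (x + t • v)) 0 = fderiv ℝ (fun y => fderiv ℝ u y v) x v := by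
  have hline (t : ℝ) : HasDerivAt (fun s : ℝ => x + s • v) v t := by
    simpa using ((hasDerivAt_id t).smul_const v).const_add x
  have hderiv : deriv (fun t : ℝ => u (x + t • v)) = fun t => fderiv ℝ u (x + t • v) v :=
    funext fun t =>
      (((hu.differentiable two_ne_zero) _).hasFDerivAt.comp_hasDerivAt t (hline t)).deriv
  rw [hderiv]
  simpa [Function.comp_def] using
    ((hu.differentiable_fderiv_apply_s10 v _).hasFDerivAt.comp_hasDerivAt 0 (hline 0)).deriv

theorem IsLocalMax.fderiv_fderiv_apply_nonpos {x : E} (h : IsLocalMax u x)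
    (hu : ContDiff ℝ 2 u) (v : E) : fderiv ℝ (fun y => fderiv ℝ u y v) x v ≤ 0 := by
  rw [← deriv_deriv_comp_add_smul_zero hu]
  have hline : Continuous fun t : ℝ => x + t • v := by fun_prop
  refine IsLocalMax.deriv_deriv_nonpos ?_ ((hu.differentiable two_ne_zero).comp (by fun_prop))
  exact IsLocalMax.comp_continuous (by simpa using h) hline.continuousAt

end Directional

section Laplacian

variable {n : ℕ} {u w : EuclideanSpace ℝ (Fin n) → ℝ}

theorem IsLocalMax.lap_nonpos {x : EuclideanSpace ℝ (Fin n)} (h : IsLocalMax u x)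
    (hu : ContDiff ℝ 2 u) : lap u x ≤ 0 :=
  Finset.sum_nonpos fun _ _ => h.fderiv_fderiv_apply_nonpos hu _

theorem lap_sub (hu : ContDiff ℝ 2 u) (hw : ContDiff ℝ 2 w) (x : EuclideanSpace ℝ (Fin n)) :
    lap (fun y => u y - w y) x = lap u x - lap w x := by
  simp only [lap, ← Finset.sum_sub_distrib]
  refine Finset.sum_congr rfl fun i _ => ?_
  set e : EuclideanSpace ℝ (Fin n) := EuclideanSpace.single i 1
  have hfderiv : (fun y => fderiv ℝ (fun y => u y - w y) y e)
      = fun y => fderiv ℝ u y e - fderiv ℝ w y e := by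
    funext y
    rw [fderiv_fun_sub ((hu.differentiable two_ne_zero) y) ((hw.differentiable two_ne_zero) y)]
    rfl
  rw [hfderiv, fderiv_fun_sub (hu.differentiable_fderiv_apply_s10 e x)
    (hw.differentiable_fderiv_apply_s10 e x)]
  rfl

theorem lap_const_mul (a : ℝ) (hu : ContDiff ℝ 2 u) (x : EuclideanSpace ℝ (Fin n)) :
    lap (fun y => a * u y) x = a * lap u x := by
  simp only [lap, Finset.mul_sum]
  refine Finset.sum_congr rfl fun i _ => ?_
  set e : EuclideanSpace ℝ (Fin n) := EuclideanSpace.single i 1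
  have hfderiv : (fun y => fderiv ℝ (fun y => a * u y) y e) = fun y => a * fderiv ℝ u y e := by
    funext y
    rw [fderiv_const_mul ((hu.differentiable two_ne_zero) y)]
    rfl
  rw [hfderiv, fderiv_const_mul (hu.differentiable_fderiv_apply_s10 e x)]
  rfl

theorem lap_norm_sq (x : EuclideanSpace ℝ (Fin n)) : lap (fun y => ‖y‖ ^ 2) x = 2 * n := by
  have hfderiv (v : EuclideanSpace ℝ (Fin n)) :
      (fun y => fderiv ℝ (fun y : EuclideanSpace ℝ (Fin n) => ‖y‖ ^ 2) y v)
        = (2 • innerSL ℝ v : EuclideanSpace ℝ (Fin n) →L[ℝ] ℝ) := by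
    ext y
    simp [real_inner_comm]
  simp only [lap, hfderiv, ContinuousLinearMap.fderiv]
  simp
  ring

end Laplacian

theorem tendsto_sub_mul_norm_sq_cocompact_atBot {E : Type*} [NormedAddCommGroup E]
    [ProperSpace E] {u : E → ℝ} {C ε : ℝ} (hC : ∀ x, u x ≤ C) (hε : 0 < ε) :
    Tendsto (fun y => u y - ε * ‖y‖ ^ 2) (cocompact E) atBot := by
  refine tendsto_atBot_mono (fun y => by linarith [hC y] : ∀ y, _ ≤ C - ε * ‖y‖ ^ 2) ?_
  have hquad : Tendsto (fun y : E => ε * ‖y‖ ^ 2) (cocompact E) atTop :=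
    ((tendsto_pow_atTop two_ne_zero).comp tendsto_norm_cocompact_atTop).const_mul_atTop hε
  simpa only [sub_eq_add_neg, Function.comp_def] using
    tendsto_atBot_add_const_left _ C (tendsto_neg_atTop_atBot.comp hquad)

section Subsolution

variable {n : ℕ} {u : EuclideanSpace ℝ (Fin n) → ℝ} {c C : ℝ}

theorem le_mul_of_mul_le_lap (hc : 0 < c) (hu : ContDiff ℝ 2 u) (hC : ∀ x, u x ≤ C)
    (hsub : ∀ x, c * u x ≤ lap u x) {ε : ℝ} (hε : 0 < ε) (x : EuclideanSpace ℝ (Fin n)) :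
    u x ≤ ε * (2 * n / c + ‖x‖ ^ 2) := by
  have hbarrier : ContDiff ℝ 2 fun y : EuclideanSpace ℝ (Fin n) => ε * ‖y‖ ^ 2 :=
    contDiff_const.mul (contDiff_norm_sq ℝ)
  have hdiff : ContDiff ℝ 2 fun y => u y - ε * ‖y‖ ^ 2 := hu.sub hbarrier
  obtain ⟨z, hz⟩ :=
    hdiff.continuous.exists_forall_ge (tendsto_sub_mul_norm_sq_cocompact_atBot hC hε)
  have hlap : lap u z ≤ 2 * n * ε := by
    have hmax : IsLocalMax (fun y => u y - ε * ‖y‖ ^ 2) z := Eventually.of_forall hz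
    have hlap_max := hmax.lap_nonpos hdiff
    rw [lap_sub hu hbarrier, lap_const_mul ε (contDiff_norm_sq ℝ), lap_norm_sq] at hlap_max
    linarith
  have huz : u z ≤ 2 * n * ε / c := by
    rw [le_div_iff₀ hc]
    linarith [hsub z]
  calc u x ≤ u z - ε * ‖z‖ ^ 2 + ε * ‖x‖ ^ 2 := by linarith [hz x]
    _ ≤ 2 * n * ε / c + ε * ‖x‖ ^ 2 := by linarith [mul_nonneg hε.le (sq_nonneg ‖z‖)]
    _ = ε * (2 * n / c + ‖x‖ ^ 2) := by ring

theorem nonpos_of_mul_le_lap (hc : 0 < c) (hu : ContDiff ℝ 2 u) (hC : ∀ x, u x ≤ C)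
    (hsub : ∀ x, c * u x ≤ lap u x) (x : EuclideanSpace ℝ (Fin n)) : u x ≤ 0 := by
  set K := 2 * n / c + ‖x‖ ^ 2
  have hK : 0 ≤ K := by positivity
  refine le_of_forall_pos_le_add fun δ hδ => ?_
  calc u x ≤ δ / (K + 1) * K := le_mul_of_mul_le_lap hc hu hC hsub (by positivity) x
    _ ≤ δ / (K + 1) * (K + 1) := by gcongr; linarith
    _ = 0 + δ := by rw [zero_add, div_mul_cancel₀ _ (by positivity)]

end Subsolution

theorem liouville_subsolution_general (n : ℕ)
    (V : EuclideanSpace ℝ (Fin n) → ℝ) (hV : ContDiff ℝ 2 V)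
    (hb : ∃ C : ℝ, ∀ x, |V x| ≤ C) (hnn : ∀ x, 0 ≤ V x)
    (hsub : ∀ x, 0 ≤ lap V x - (3 / 4) * V x) :
    ∀ x, V x = 0 := by
  obtain ⟨C, hC⟩ := hb
  intro x
  refine le_antisymm ?_ (hnn x)
  exact nonpos_of_mul_le_lap (by norm_num : (0 : ℝ) < 3 / 4) hV
    (fun y => (le_abs_self _).trans (hC y)) (fun y => by linarith [hsub y]) x

/-- Liouville-type result : a bounded nonnegative `C²` subsolution of `Δ - 3/4` on `ℝⁿ`
vanishes identically. -/
theorem liouville_subsolution (n : ℕ) (hn : 1 ≤ n)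
    (V : EuclideanSpace ℝ (Fin n) → ℝ) (hV : ContDiff ℝ 2 V)
    (hb : ∃ C : ℝ, ∀ x, |V x| ≤ C) (hnn : ∀ x, 0 ≤ V x)
    (hsub : ∀ x, 0 ≤ lap V x - (3 / 4) * V x) :
    ∀ x, V x = 0 :=
  liouville_subsolution_general n V hV hb hnn hsub
end
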